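/- arXiv:2106.02583 — 2 statements merged into one kernel-verified Lean document; each statement's English description precedes it below -/
import Mathlib

section
/- Under the condition of the stability lemma (γ > 0, K_E β² ≤ K_I α², K_E, K_I ≥ 0, 0 < α < β), every Fourier mode of the dynamics da/dt = (−γ + K_E/(1+α²λ²) − K_I/(1+β²λ²))·a satisfies |a(t)| ≤ |a(0)|·e^{−γt} for all t ≥ 0. -/
open Real

theorem stmt_7 (γ KE KI α β lam : ℝ) (hγ : 0 < γ) (hKE : 0 ≤ KE) (hKI : 0 ≤ KI)
    (hα : 0 < α) (hαβ : α < β) (hstab : KE * β^2 ≤ KI * α^2)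
    (a : ℝ → ℝ)
    (ha : ∀ t, HasDerivAt a ((-γ + KE / (1 + α^2 * lam^2) - KI / (1 + β^2 * lam^2)) * a t) t) :
    ∀ t : ℝ, 0 ≤ t → |a t| ≤ |a 0| * Real.exp (-γ * t) := by
  set μ : ℝ := -γ + KE / (1 + α^2 * lam^2) - KI / (1 + β^2 * lam^2) with hμ
  have hpα : (0:ℝ) < 1 + α^2 * lam^2 := by positivity
  have hpβ : (0:ℝ) < 1 + β^2 * lam^2 := by positivity
  have hKEKI : KE ≤ KI := by
    have h1 : KE * α^2 ≤ KE * β^2 := mul_le_mul_of_nonneg_left (pow_le_pow_left₀ hα.le hαβ.le 2) hKE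
    have h2 : KE * α^2 ≤ KI * α^2 := h1.trans hstab
    exact le_of_mul_le_mul_right (by linarith) (pow_pos hα 2)
  have hfrac : KE / (1 + α^2 * lam^2) ≤ KI / (1 + β^2 * lam^2) := by
    rw [div_le_div_iff₀ hpα hpβ]
    nlinarith [sq_nonneg lam]
  have hμle : μ ≤ -γ := by simp [hμ]; linarith
  -- a t = a 0 * exp (μ t)
  have hsol : ∀ t, a t = a 0 * Real.exp (μ * t) := by
    intro t
    have key : ∀ s, HasDerivAt (fun s => a s * Real.exp (-(μ * s))) 0 s := by
      intro s
      have h1 := (ha s).mul (((hasDerivAt_id s).const_mul μ).neg.exp)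
      convert h1 using 1
      · rfl
      · rfl
      · rfl
      · simp only [Pi.neg_apply, id]
        ring
    have hconst : (fun s => a s * Real.exp (-(μ * s))) t
        = (fun s => a s * Real.exp (-(μ * s))) 0 :=
      is_const_of_deriv_eq_zero (fun x => (key x).differentiableAt)
        (fun x => (key x).deriv) t 0
    have h0 : a t * Real.exp (-(μ * t)) = a 0 := by simpa using hconst
    have := congrArg (· * Real.exp (μ * t)) h0
    simpa [mul_assoc, ← Real.exp_add] using this
  intro t ht
  rw [hsol t, abs_mul, abs_exp]
  apply mul_le_mul_of_nonneg_left _ (abs_nonneg _)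
  exact Real.exp_le_exp.mpr (by nlinarith)
end

section
/- For 0 < α < β and 0 < s ≤ 1, the closed-loop dynamics with gains γ = s^{3/2}, K_E = κ_e(s), K_I = κ_i(s) are exponentially stable: for all λ ∈ ℝ, s^{3/2} − κ_e(s)/(1+α²λ²) + κ_i(s)/(1+β²λ²) ≥ s^{3/2} > 0. -/
open Real

theorem stmt_16 (α β s : ℝ) (hα : 0 < α) (hαβ : α < β) (hs0 : 0 < s) (hs1 : s ≤ 1)
    (κe κi : ℝ)
    (hκe : κe = (α^2 * (s ^ (-(5:ℝ)/2) - s ^ (-(1:ℝ)/2)) - β^2 * (s ^ (-(1:ℝ)/2) - s ^ ((3:ℝ)/2))) / (β^2 - α^2))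
    (hκi : κi = (β^2 * (s ^ (-(5:ℝ)/2) - s ^ (-(1:ℝ)/2)) - α^2 * (s ^ (-(1:ℝ)/2) - s ^ ((3:ℝ)/2))) / (β^2 - α^2))
    (lam : ℝ) :
    s ^ ((3:ℝ)/2) - κe / (1 + α^2 * lam^2) + κi / (1 + β^2 * lam^2) ≥ s ^ ((3:ℝ)/2) ∧
    (0:ℝ) < s ^ ((3:ℝ)/2) := by
  have hc : (0:ℝ) < s ^ ((3:ℝ)/2) := Real.rpow_pos_of_pos hs0 _
  have hab : s ^ (-(1:ℝ)/2) ≤ s ^ (-(5:ℝ)/2) :=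
    Real.rpow_le_rpow_of_exponent_ge hs0 hs1 (by norm_num)
  have hbc : s ^ ((3:ℝ)/2) ≤ s ^ (-(1:ℝ)/2) :=
    Real.rpow_le_rpow_of_exponent_ge hs0 hs1 (by norm_num)
  set a := s ^ (-(5:ℝ)/2)
  set b := s ^ (-(1:ℝ)/2)
  set c := s ^ ((3:ℝ)/2)
  have hβ : 0 < β := lt_trans hα hαβ
  have hd : 0 < β^2 - α^2 := by nlinarith
  have h1 : 0 < 1 + α^2 * lam^2 := by positivity
  have h2 : 0 < 1 + β^2 * lam^2 := by positivity
  refine ⟨?_, hc⟩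
  have key : κe / (1 + α^2 * lam^2) ≤ κi / (1 + β^2 * lam^2) := by
    rw [div_le_div_iff₀ h1 h2, hκe, hκi, div_mul_eq_mul_div, div_mul_eq_mul_div,
      div_le_div_iff₀ hd hd]
    nlinarith [mul_nonneg (sub_nonneg.2 hbc) (sq_nonneg (lam * (β^2 - α^2))),
      mul_nonneg (sub_nonneg.2 hab) hd.le, mul_nonneg (sub_nonneg.2 hbc) hd.le,
      sq_nonneg lam, mul_pos hd hd]
  linarith
end
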